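/- arXiv:2510.00849 — 2 statements merged into one kernel-verified Lean document; each statement's English description precedes it below -/
import Mathlib

section
/- With V, g, P, π, ω, Ric, the Ricci tensors Ricθ, the scalar curvatures rθ, and the Einstein type tensors Eθ = Ricθ − (rθ/n)·g and E = Ric − (r/n)·g as in the pointwise model, the following identities of bilinear forms hold: E⁰ = E + ((n−1)/(4n))·π(P)·g − ((n−1)/4)·(π⊗π); E¹ = E² = E³ = E; E⁴ = E + ((n−1)/n)·π(P)·g − (n−1)·(π⊗π); E⁵ = E + ((n−1)/(2n))·π(P)·g − ((n−1)/2)·(π⊗π). -/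
/-- The `g`-trace of a bilinear form `B`: the trace of the endomorphism
`(g♭)⁻¹ ∘ B♭` of `V`, where `B♭ : V → V*` is `X ↦ B(X,·)`. -/
noncomputable def trG {V : Type*} [AddCommGroup V] [Module ℝ V] [FiniteDimensional ℝ V]
    (g : LinearMap.BilinForm ℝ V) (hg : g.Nondegenerate)
    (B : LinearMap.BilinForm ℝ V) : ℝ :=
  LinearMap.trace ℝ V ((g.toDual hg).symm.toLinearMap ∘ₗ B)

/-!
Taking the traceless part `B ↦ B - (tr_g B / n) g` is linear and annihilates `g`, and
`tr_g (π ⊗ π) = π(P)` because `π = g(·, P)` with `g` symmetric. Hence the multiples of `g`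
in each `Ricθ` drop out, and `Eθ = E - c · (π ⊗ π - (π(P) / n) g)`, where `c` is the coefficient of `π ⊗ π` in `Ricθ`.
-/

section TracelessPart

open LinearMap (BilinForm)

variable {V : Type*} [AddCommGroup V] [Module ℝ V] [FiniteDimensional ℝ V]
  (g : BilinForm ℝ V) (hg : g.Nondegenerate)

lemma trG_sub (A B : BilinForm ℝ V) : trG g hg (A - B) = trG g hg A - trG g hg B := by
  simp only [trG, LinearMap.comp_sub, map_sub]

lemma trG_smul (c : ℝ) (B : BilinForm ℝ V) : trG g hg (c • B) = c * trG g hg B := by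
  simp only [trG, LinearMap.comp_smul, map_smul, smul_eq_mul]

lemma trG_self : trG g hg g = Module.finrank ℝ V := by
  have hid : (g.toDual hg).symm.toLinearMap ∘ₗ g = LinearMap.id := by
    ext x
    exact (g.toDual hg).symm_apply_apply x
  rw [trG, hid, LinearMap.trace_id]

lemma trG_smulRight (φ ψ : V →ₗ[ℝ] ℝ) :
    trG g hg (φ.smulRight ψ) = φ ((g.toDual hg).symm ψ) := by
  have hcomp : (g.toDual hg).symm.toLinearMap ∘ₗ φ.smulRight ψ =
      φ.smulRight ((g.toDual hg).symm ψ) := by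
    ext x
    simp
  rw [trG, hcomp, LinearMap.trace_smulRight]

lemma toDual_symm_flip_apply (hgs : g.IsSymm) (P : V) : (g.toDual hg).symm (g.flip P) = P := by
  rw [LinearEquiv.symm_apply_eq]
  ext x
  exact hgs.eq x P

noncomputable def tracelessPart (B : BilinForm ℝ V) : BilinForm ℝ V :=
  B - (trG g hg B / Module.finrank ℝ V) • g

lemma tracelessPart_sub (A B : BilinForm ℝ V) :
    tracelessPart g hg (A - B) = tracelessPart g hg A - tracelessPart g hg B := by
  simp only [tracelessPart, trG_sub]
  module

lemma tracelessPart_smul (c : ℝ) (B : BilinForm ℝ V) :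
    tracelessPart g hg (c • B) = c • tracelessPart g hg B := by
  simp only [tracelessPart, trG_smul]
  module

lemma tracelessPart_self : tracelessPart g hg g = 0 := by
  -- in dimension 0 the division is junk (`x / 0 = 0`), but then every form vanishes
  rcases eq_or_ne (Module.finrank ℝ V) 0 with h | h
  · have : Subsingleton V := Module.finrank_zero_iff.mp h
    ext x y
    simp [Subsingleton.elim x 0]
  · rw [tracelessPart, trG_self, div_self (by exact_mod_cast h), one_smul]
    exact sub_self g

end TracelessPart

theorem stmt_1_general {V : Type*} [AddCommGroup V] [Module ℝ V] [FiniteDimensional ℝ V]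
    (n : ℕ) (hdim : Module.finrank ℝ V = n)
    (g : LinearMap.BilinForm ℝ V) (hg : g.Nondegenerate) (hgs : g.IsSymm)
    (P : V) (π : V →ₗ[ℝ] ℝ) (hπ : π = g.flip P) (ω : ℝ)
    (ππ : LinearMap.BilinForm ℝ V) (hππ : ππ = π.smulRight π)
    (Ric : LinearMap.BilinForm ℝ V)
    (Ric0 Ric1 Ric2 Ric3 Ric4 Ric5 : LinearMap.BilinForm ℝ V)
    (hRic0 : Ric0 = Ric - ((((n : ℝ) - 1) / 2) * (3 * ω + π P)) • g - (((n : ℝ) - 1) / 4) • ππ)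
    (hRic1 : Ric1 = Ric - (((n : ℝ) - 1) * (2 * ω + π P)) • g)
    (hRic2 : Ric2 = Ric - (((n : ℝ) - 1) * ω) • g)
    (hRic3 : Ric3 = Ric - (((n : ℝ) - 1) * ω) • g)
    (hRic4 : Ric4 = Ric - (((n : ℝ) - 1) * ω) • g - ((n : ℝ) - 1) • ππ)
    (hRic5 : Ric5 = Ric - ((((n : ℝ) - 1) / 2) * (3 * ω + π P)) • g - (((n : ℝ) - 1) / 2) • ππ)
    (E E0 E1 E2 E3 E4 E5 : LinearMap.BilinForm ℝ V)
    (hE : E = Ric - (trG g hg Ric / (n : ℝ)) • g)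
    (hE0 : E0 = Ric0 - (trG g hg Ric0 / (n : ℝ)) • g)
    (hE1 : E1 = Ric1 - (trG g hg Ric1 / (n : ℝ)) • g)
    (hE2 : E2 = Ric2 - (trG g hg Ric2 / (n : ℝ)) • g)
    (hE3 : E3 = Ric3 - (trG g hg Ric3 / (n : ℝ)) • g)
    (hE4 : E4 = Ric4 - (trG g hg Ric4 / (n : ℝ)) • g)
    (hE5 : E5 = Ric5 - (trG g hg Ric5 / (n : ℝ)) • g) :
    E0 = E + ((((n : ℝ) - 1) / (4 * (n : ℝ))) * π P) • g - (((n : ℝ) - 1) / 4) • ππ ∧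
    E1 = E ∧ E2 = E ∧ E3 = E ∧
    E4 = E + ((((n : ℝ) - 1) / (n : ℝ)) * π P) • g - ((n : ℝ) - 1) • ππ ∧
    E5 = E + ((((n : ℝ) - 1) / (2 * (n : ℝ))) * π P) • g - (((n : ℝ) - 1) / 2) • ππ := by
  subst hdim
  rw [← tracelessPart.eq_1] at hE hE0 hE1 hE2 hE3 hE4 hE5
  have hππ' : tracelessPart g hg ππ = ππ - (π P / Module.finrank ℝ V) • g := by
    rw [tracelessPart, hππ, trG_smulRight, hπ, toDual_symm_flip_apply g hg hgs]
  subst hE hE0 hE1 hE2 hE3 hE4 hE5 hRic0 hRic1 hRic2 hRic3 hRic4 hRic5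
  simp only [tracelessPart_sub, tracelessPart_smul, tracelessPart_self, hππ']
  refine ⟨?_, ?_, ?_, ?_, ?_, ?_⟩ <;> module

theorem stmt_1 {V : Type*} [AddCommGroup V] [Module ℝ V] [FiniteDimensional ℝ V]
    (n : ℕ) (hn : 3 ≤ n) (hdim : Module.finrank ℝ V = n)
    (g : LinearMap.BilinForm ℝ V) (hg : g.Nondegenerate) (hgs : g.IsSymm)
    (P : V) (π : V →ₗ[ℝ] ℝ) (hπ : π = g.flip P) (ω : ℝ)
    (ππ : LinearMap.BilinForm ℝ V) (hππ : ππ = π.smulRight π)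
    (Ric : LinearMap.BilinForm ℝ V) (hRicSymm : Ric.IsSymm)
    (Ric0 Ric1 Ric2 Ric3 Ric4 Ric5 : LinearMap.BilinForm ℝ V)
    (hRic0 : Ric0 = Ric - ((((n : ℝ) - 1) / 2) * (3 * ω + π P)) • g - (((n : ℝ) - 1) / 4) • ππ)
    (hRic1 : Ric1 = Ric - (((n : ℝ) - 1) * (2 * ω + π P)) • g)
    (hRic2 : Ric2 = Ric - (((n : ℝ) - 1) * ω) • g)
    (hRic3 : Ric3 = Ric - (((n : ℝ) - 1) * ω) • g)
    (hRic4 : Ric4 = Ric - (((n : ℝ) - 1) * ω) • g - ((n : ℝ) - 1) • ππ)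
    (hRic5 : Ric5 = Ric - ((((n : ℝ) - 1) / 2) * (3 * ω + π P)) • g - (((n : ℝ) - 1) / 2) • ππ)
    (E E0 E1 E2 E3 E4 E5 : LinearMap.BilinForm ℝ V)
    (hE : E = Ric - (trG g hg Ric / (n : ℝ)) • g)
    (hE0 : E0 = Ric0 - (trG g hg Ric0 / (n : ℝ)) • g)
    (hE1 : E1 = Ric1 - (trG g hg Ric1 / (n : ℝ)) • g)
    (hE2 : E2 = Ric2 - (trG g hg Ric2 / (n : ℝ)) • g)
    (hE3 : E3 = Ric3 - (trG g hg Ric3 / (n : ℝ)) • g)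
    (hE4 : E4 = Ric4 - (trG g hg Ric4 / (n : ℝ)) • g)
    (hE5 : E5 = Ric5 - (trG g hg Ric5 / (n : ℝ)) • g) :
    E0 = E + ((((n : ℝ) - 1) / (4 * (n : ℝ))) * π P) • g - (((n : ℝ) - 1) / 4) • ππ ∧
    E1 = E ∧ E2 = E ∧ E3 = E ∧
    E4 = E + ((((n : ℝ) - 1) / (n : ℝ)) * π P) • g - ((n : ℝ) - 1) • ππ ∧
    E5 = E + ((((n : ℝ) - 1) / (2 * (n : ℝ))) * π P) • g - (((n : ℝ) - 1) / 2) • ππ :=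
  stmt_1_general n hdim g hg hgs P π hπ ω ππ hππ Ric Ric0 Ric1 Ric2 Ric3 Ric4 Ric5 hRic0 hRic1 hRic2
    hRic3 hRic4 hRic5 E E0 E1 E2 E3 E4 E5 hE hE0 hE1 hE2 hE3 hE4 hE5
end

section
/- In the GRW specialization of the pointwise model with g(P,P) = −1, ω = 1, and Ric(P,X) = (n−1)·π(X) for all X ∈ V, the Ricci tensors of the semi-symmetric metric P-connection satisfy 4·Ric⁰(P,X) = Ric⁴(P,X) = 2·Ric⁵(P,X) = (n−1)·π(X) for all X ∈ V; in particular (n−1)/4, n−1 and (n−1)/2 are eigenvalues of Ric⁰, Ric⁴ and Ric⁵ respectively, corresponding to the eigenvector P. -/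
/-!
Since `P` is a unit timelike vector, `π(P) = g(P,P) = -1`, and the symmetry of `g` gives
`g(P,X) = π(X)`. Hence each tensor `Ric - a g - b π⊗π` sends `(P,X)` to `((n-1) - a + b) π(X)`,
and the three coefficients come out as `(n-1)/4`, `n-1` and `(n-1)/2`.
-/

namespace LinearMap.BilinForm

variable {R M : Type*} [CommRing R] [AddCommGroup M] [Module R M]

theorem IsSymm.apply_eq_flip_apply {g : LinearMap.BilinForm R M} (hg : g.IsSymm) (P X : M) :
    g P X = g.flip P X :=
  hg.eq P X

theorem sub_smul_sub_smul_smulRight_apply_of_apply_eq {Ric g : LinearMap.BilinForm R M} {π : M →ₗ[R] R}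
    {P : M} {c κ : R} (hRic : ∀ X, Ric P X = c * π X) (hg : ∀ X, g P X = π X) (hπP : π P = κ)
    (a b : R) (X : M) :
    (Ric - a • g - b • π.smulRight π) P X = (c - a - b * κ) * π X := by
  simp only [sub_apply, smul_apply, smulRight_apply, smul_eq_mul, hRic, hg, hπP]
  ring

end LinearMap.BilinForm

open LinearMap.BilinForm

theorem stmt_8_general {V : Type*} [AddCommGroup V] [Module ℝ V]
    (n : ℕ)
    (g : LinearMap.BilinForm ℝ V) (hgs : g.IsSymm)
    (P : V) (hP : g P P = -1) (π : V →ₗ[ℝ] ℝ) (hπ : π = g.flip P)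
    (ω : ℝ) (hω : ω = 1)
    (ππ : LinearMap.BilinForm ℝ V) (hππ : ππ = π.smulRight π)
    (Ric : LinearMap.BilinForm ℝ V)
    (hRicP : ∀ X : V, Ric P X = ((n : ℝ) - 1) * π X)
    (Ric0 Ric4 Ric5 : LinearMap.BilinForm ℝ V)
    (hRic0 : Ric0 = Ric - ((((n : ℝ) - 1) / 2) * (3 * ω + π P)) • g - (((n : ℝ) - 1) / 4) • ππ)
    (hRic4 : Ric4 = Ric - (((n : ℝ) - 1) * ω) • g - ((n : ℝ) - 1) • ππ)
    (hRic5 : Ric5 = Ric - ((((n : ℝ) - 1) / 2) * (3 * ω + π P)) • g - (((n : ℝ) - 1) / 2) • ππ) :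
    (∀ X : V, 4 * Ric0 P X = ((n : ℝ) - 1) * π X ∧
              Ric4 P X = ((n : ℝ) - 1) * π X ∧
              2 * Ric5 P X = ((n : ℝ) - 1) * π X) ∧
    (∀ X : V, Ric0 P X = (((n : ℝ) - 1) / 4) * g P X ∧
              Ric4 P X = ((n : ℝ) - 1) * g P X ∧
              Ric5 P X = (((n : ℝ) - 1) / 2) * g P X) := by
  have hgP : ∀ X, g P X = π X := fun X => by rw [hπ]; exact hgs.apply_eq_flip_apply P X
  have hπP : π P = -1 := (hgP P).symm.trans hP
  have hRicApply := sub_smul_sub_smul_smulRight_apply_of_apply_eq hRicP hgP hπP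
  subst hω hππ hRic0 hRic4 hRic5
  simp only [hRicApply, hπP, hgP]
  refine ⟨fun X => ⟨by ring, by ring, by ring⟩, fun X => ⟨by ring, by ring, by ring⟩⟩

theorem stmt_8 {V : Type*} [AddCommGroup V] [Module ℝ V] [FiniteDimensional ℝ V]
    (n : ℕ) (hn : 3 ≤ n) (hdim : Module.finrank ℝ V = n)
    (g : LinearMap.BilinForm ℝ V) (hg : g.Nondegenerate) (hgs : g.IsSymm)
    (P : V) (hP : g P P = -1) (π : V →ₗ[ℝ] ℝ) (hπ : π = g.flip P)
    (ω : ℝ) (hω : ω = 1)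
    (ππ : LinearMap.BilinForm ℝ V) (hππ : ππ = π.smulRight π)
    (Ric : LinearMap.BilinForm ℝ V) (hRicSymm : Ric.IsSymm)
    (hRicP : ∀ X : V, Ric P X = ((n : ℝ) - 1) * π X)
    (Ric0 Ric4 Ric5 : LinearMap.BilinForm ℝ V)
    (hRic0 : Ric0 = Ric - ((((n : ℝ) - 1) / 2) * (3 * ω + π P)) • g - (((n : ℝ) - 1) / 4) • ππ)
    (hRic4 : Ric4 = Ric - (((n : ℝ) - 1) * ω) • g - ((n : ℝ) - 1) • ππ)
    (hRic5 : Ric5 = Ric - ((((n : ℝ) - 1) / 2) * (3 * ω + π P)) • g - (((n : ℝ) - 1) / 2) • ππ) :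
    (∀ X : V, 4 * Ric0 P X = ((n : ℝ) - 1) * π X ∧
              Ric4 P X = ((n : ℝ) - 1) * π X ∧
              2 * Ric5 P X = ((n : ℝ) - 1) * π X) ∧
    (∀ X : V, Ric0 P X = (((n : ℝ) - 1) / 4) * g P X ∧
              Ric4 P X = ((n : ℝ) - 1) * g P X ∧
              Ric5 P X = (((n : ℝ) - 1) / 2) * g P X) :=
  stmt_8_general n g hgs P hP π hπ ω hω ππ hππ Ric hRicP Ric0 Ric4 Ric5 hRic0 hRic4 hRic5
end
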